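/- Let G be a finite simple connected graph with vertex set V and edge set E, let a^T x ≤ b be a valid inequality for BOND(G), let pq ∈ E, and let S ⊆ V ∖ {p, q}. If δ(S), δ(S ∪ {p}), δ(S ∪ {q}), and δ(S ∪ {p, q}) are all bonds of G whose indicator vectors satisfy a^T x = b, then a_{pq} = 0. -/
import Mathlib


open Finset

namespace BondPolytope

variable {V : Type*}

/-- The cut `δ(S)`: edges of `G` with exactly one endpoint in `S`. -/
def cut (G : SimpleGraph V) (S : Set V) : Set (Sym2 V) :=
  {e | e ∈ G.edgeSet ∧ ∃ u w, e = s(u, w) ∧ u ∈ S ∧ w ∉ S}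

/-- A set of edges is a cut of `G`. -/
def IsCut (G : SimpleGraph V) (D : Set (Sym2 V)) : Prop :=
  ∃ S : Set V, D = cut G S

/-- A set of edges is a bond of `G`: it is a cut `δ(S)` such that both sides induce
connected (possibly empty) subgraphs. -/
def IsBond (G : SimpleGraph V) (D : Set (Sym2 V)) : Prop :=
  ∃ S : Set V, D = cut G S ∧ (G.induce S).Preconnected ∧ (G.induce Sᶜ).Preconnected

open Classical in
/-- The indicator vector `x^δ ∈ ℝ^E` of a set `δ` of edges. -/
noncomputable def indVec (G : SimpleGraph V) (D : Set (Sym2 V)) : ↥G.edgeSet → ℝ :=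
  fun e => if (e : Sym2 V) ∈ D then 1 else 0

/-- The bond polytope `BOND(G) ⊆ ℝ^E`. -/
noncomputable def bondPolytope (G : SimpleGraph V) : Set (↥G.edgeSet → ℝ) :=
  convexHull ℝ {x | ∃ D, IsBond G D ∧ x = indVec G D}

/-- The cut polytope `CUT(G) ⊆ ℝ^E`. -/
noncomputable def cutPolytope (G : SimpleGraph V) : Set (↥G.edgeSet → ℝ) :=
  convexHull ℝ {x | ∃ D, IsCut G D ∧ x = indVec G D}

/-- `a^T x`. -/
noncomputable def dot {ι : Type*} [Fintype ι] (a x : ι → ℝ) : ℝ := ∑ i, a i * x i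

/-- Affine dimension of a set of points. -/
noncomputable def affDim {W : Type*} [AddCommGroup W] [Module ℝ W] (s : Set W) : ℕ :=
  Module.finrank ℝ ↥(vectorSpan ℝ s)

/-- `a^T x ≤ b` is facet-defining for `P`. -/
def IsFacet {ι : Type*} [Fintype ι] (P : Set (ι → ℝ)) (a : ι → ℝ) (b : ℝ) : Prop :=
  a ≠ 0 ∧ (∀ x ∈ P, dot a x ≤ b) ∧ {x ∈ P | dot a x = b}.Nonempty ∧
    affDim {x ∈ P | dot a x = b} + 1 = affDim P



lemma mem_cut_iff {G : SimpleGraph V} {T : Set V} {u w : V} (h : s(u, w) ∈ G.edgeSet) :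
    s(u, w) ∈ cut G T ↔ ((u ∈ T ∧ w ∉ T) ∨ (w ∈ T ∧ u ∉ T)) := by
  constructor
  · rintro ⟨-, u', w', heq, hu', hw'⟩
    rw [Sym2.eq_iff] at heq
    rcases heq with ⟨rfl, rfl⟩ | ⟨rfl, rfl⟩
    · exact Or.inl ⟨hu', hw'⟩
    · exact Or.inr ⟨hu', hw'⟩
  · rintro (⟨h1, h2⟩ | ⟨h1, h2⟩)
    · exact ⟨h, u, w, rfl, h1, h2⟩
    · exact ⟨h, w, u, Sym2.eq_swap.symm, h1, h2⟩

theorem coefficient_zero_of_four_tight_bonds {V : Type*} [Fintype V] [DecidableEq V]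
    (G : SimpleGraph V) [DecidableRel G.Adj] (hG : G.Connected)
    (a : ↥G.edgeSet → ℝ) (b : ℝ)
    (hvalid : ∀ x ∈ bondPolytope G, dot a x ≤ b)
    (p q : V) (hpq : G.Adj p q) (S : Set V) (hSp : p ∉ S) (hSq : q ∉ S)
    (h1 : IsBond G (cut G S) ∧ dot a (indVec G (cut G S)) = b)
    (h2 : IsBond G (cut G (insert p S)) ∧ dot a (indVec G (cut G (insert p S))) = b)
    (h3 : IsBond G (cut G (insert q S)) ∧ dot a (indVec G (cut G (insert q S))) = b)
    (h4 : IsBond G (cut G (insert p (insert q S))) ∧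
      dot a (indVec G (cut G (insert p (insert q S)))) = b) :
    a ⟨s(p, q), G.mem_edgeSet.mpr hpq⟩ = 0 := by
  classical
  set epq : ↥G.edgeSet := ⟨s(p, q), G.mem_edgeSet.mpr hpq⟩ with hepq
  have hne : p ≠ q := G.ne_of_adj hpq
  have key : ∀ e : ↥G.edgeSet,
      a e * indVec G (cut G S) e + a e * indVec G (cut G (insert p (insert q S))) e
        - a e * indVec G (cut G (insert p S)) e - a e * indVec G (cut G (insert q S)) e
      = if e = epq then -2 * a e else 0 := by
    rintro ⟨e, he⟩
    revert he
    induction e using Sym2.ind with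
    | _ u w =>
      intro he
      have hadj : G.Adj u w := G.mem_edgeSet.mp he
      have huw : u ≠ w := G.ne_of_adj hadj
      simp only [indVec, mem_cut_iff he, Set.mem_insert_iff, hepq, Subtype.mk.injEq,
        Sym2.eq_iff]
      by_cases hup : u = p <;> by_cases huq : u = q <;> by_cases hwp : w = p <;>
        by_cases hwq : w = q <;> by_cases huS : u ∈ S <;> by_cases hwS : w ∈ S <;>
        simp_all <;> ring
  have hsum : dot a (indVec G (cut G S)) + dot a (indVec G (cut G (insert p (insert q S))))
      - dot a (indVec G (cut G (insert p S))) - dot a (indVec G (cut G (insert q S)))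
      = -2 * a epq := by
    simp only [dot, ← Finset.sum_add_distrib, ← Finset.sum_sub_distrib]
    rw [Finset.sum_congr rfl fun e _ => key e]
    simp [Finset.sum_ite_eq']
  rw [h1.2, h2.2, h3.2, h4.2] at hsum
  have : -2 * a epq = 0 := by linarith
  have := (mul_eq_zero.mp this).resolve_left (by norm_num)
  simpa [hepq] using this


end BondPolytope
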